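/- Let the time domain be ℤ and let J be admissible uniformity dimensions, with Σ_J(A) = [a_1,b_1] ∪ … ∪ [a_ℓ,b_ℓ] where a_1 ≤ b_1 < a_2 ≤ … < a_ℓ ≤ b_ℓ, and set b_0 := −∞, a_{ℓ+1} := +∞. For k ∈ {1,…,ℓ} let W_k := { x₀ ∈ ℝ^d : lim_{n→−∞} e^{−γ_1 n}·x(n,x₀) = 0 and lim_{n→∞} e^{−γ_2 n}·x(n,x₀) = 0 }, where γ_1 ∈ (b_{k−1}, a_k) and γ_2 ∈ (b_k, a_{k+1}) (the sets W_k are independent of these choices). Then each W_k is a subspace and ℝ^d = W_1 ⊕ … ⊕ W_ℓ. -/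
import Mathlib


open Set Filter Topology

noncomputable section

abbrev Euc (d : ℕ) := EuclideanSpace ℝ (Fin d)

def solFwd {d : ℕ} (A : ℤ → (Euc d ≃L[ℝ] Euc d)) : ℕ → Euc d → Euc d
  | 0, x => x
  | n + 1, x => A (n : ℤ) (solFwd A n x)

def solBwd {d : ℕ} (A : ℤ → (Euc d ≃L[ℝ] Euc d)) : ℕ → Euc d → Euc d
  | 0, x => (A (-1)).symm x
  | n + 1, x => (A (Int.negSucc (n + 1))).symm (solBwd A n x)

/-- The solution `x(n,x₀)` for two-sided time `ℤ`. -/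
def solZ {d : ℕ} (A : ℤ → (Euc d ≃L[ℝ] Euc d)) : ℤ → Euc d → Euc d
  | Int.ofNat n, x => solFwd A n x
  | Int.negSucc n, x => solBwd A n x

/-- Boundedness of the coefficients `A(n)` and their inverses. -/
def BddSysZ {d : ℕ} (A : ℤ → (Euc d ≃L[ℝ] Euc d)) : Prop :=
  (∃ c : ℝ, ∀ n : ℤ, ‖(A n : Euc d →L[ℝ] Euc d)‖ ≤ c) ∧
  (∃ c : ℝ, ∀ n : ℤ, ‖((A n).symm : Euc d →L[ℝ] Euc d)‖ ≤ c)

/-- `D1(γ,U)` holds uniformly (two-sided time). -/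
def D1uZ {d : ℕ} (A : ℤ → (Euc d ≃L[ℝ] Euc d)) (γ : ℝ) (U : Submodule ℝ (Euc d)) : Prop :=
  ∃ C : ℝ, 0 < C ∧
    ∀ m n : ℤ, m ≤ n → ∀ x₀ ∈ U,
      ‖solZ A n x₀‖ ≤ C * Real.exp (γ * ((n : ℝ) - (m : ℝ))) * ‖solZ A m x₀‖

/-- `D2(γ,U)` holds uniformly (two-sided time). -/
def D2uZ {d : ℕ} (A : ℤ → (Euc d ≃L[ℝ] Euc d)) (γ : ℝ) (U : Submodule ℝ (Euc d)) : Prop :=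
  ∃ C : ℝ, 0 < C ∧
    ∀ m n : ℤ, m ≤ n → ∀ x₀ ∈ U,
      C * Real.exp (γ * ((n : ℝ) - (m : ℝ))) * ‖solZ A m x₀‖ ≤ ‖solZ A n x₀‖

/-- `𝒰` is a set of subspaces of `L` whose union is `L`. -/
def IsCover {d : ℕ} (𝒰 : Set (Submodule ℝ (Euc d))) (L : Submodule ℝ (Euc d)) : Prop :=
  (∀ U ∈ 𝒰, U ≤ L) ∧ (⋃ U ∈ 𝒰, (U : Set (Euc d))) = (L : Set (Euc d))

/-- `𝒢_j(L)` : the set of `j`-dimensional subspaces of `L`. -/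
def Gr {d : ℕ} (j : ℕ) (L : Submodule ℝ (Euc d)) : Set (Submodule ℝ (Euc d)) :=
  {U | U ≤ L ∧ Module.finrank ℝ U = j}

/-- The `γ`-shifted system has a dichotomy on the splitting `(L1,L2)` with uniformity
dimensions `(j1,j2)` (two-sided time). -/
def DichotomyDimZ {d : ℕ} (A : ℤ → (Euc d ≃L[ℝ] Euc d)) (γ : ℝ)
    (L1 L2 : Submodule ℝ (Euc d)) (j1 j2 : ℕ) : Prop :=
  IsCompl L1 L2 ∧ IsCover (Gr j1 L1) L1 ∧ IsCover (Gr j2 L2) L2 ∧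
  ∃ α : ℝ, 0 < α ∧ (∀ U ∈ Gr j1 L1, D1uZ A (γ - α) U) ∧ (∀ U ∈ Gr j2 L2, D2uZ A (γ + α) U)

/-- `(j1,j2)` is `k`-admissible. -/
def KAdmissible (d k j1 j2 : ℕ) : Prop :=
  (k = 0 → j1 = 0 ∧ 1 ≤ j2 ∧ j2 ≤ d) ∧
  (1 ≤ k → k ≤ d - 1 → 1 ≤ j1 ∧ j1 ≤ k ∧ 1 ≤ j2 ∧ j2 ≤ d - k) ∧
  (k = d → 1 ≤ j1 ∧ j1 ≤ d ∧ j2 = 0)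

/-- The dichotomy resolvent `ρ_J(A)` (two-sided time). -/
def dichResZ {d : ℕ} (A : ℤ → (Euc d ≃L[ℝ] Euc d)) (J : ℕ → ℕ × ℕ) : Set ℝ :=
  {γ | ∃ L1 L2 : Submodule ℝ (Euc d),
    DichotomyDimZ A γ L1 L2 (J (Module.finrank ℝ L1)).1 (J (Module.finrank ℝ L1)).2}


/-! ### Auxiliary development -/

section Aux

open Real

lemma exp_decay_atTop {β : ℝ} (hβ : β < 0) (C : ℝ) :
    Tendsto (fun n : ℤ => C * Real.exp (β * (n : ℝ))) atTop (𝓝 0) := by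
  have h1 : Tendsto (fun n : ℤ => (n : ℝ)) atTop atTop := tendsto_intCast_atTop_atTop
  have h2 : Tendsto (fun t : ℝ => β * t) atTop atBot :=
    (tendsto_const_mul_atBot_of_neg hβ).2 tendsto_id
  have h3 : Tendsto (fun t : ℝ => Real.exp (β * t)) atTop (𝓝 0) :=
    Real.tendsto_exp_atBot.comp h2
  have h4 := (h3.comp h1).const_mul C
  simpa using h4

lemma exp_decay_atBot {β : ℝ} (hβ : 0 < β) (C : ℝ) :
    Tendsto (fun n : ℤ => C * Real.exp (β * (n : ℝ))) atBot (𝓝 0) := by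
  have h1 : Tendsto (fun n : ℤ => (n : ℝ)) atBot atBot := tendsto_intCast_atBot_iff.2 tendsto_id
  have h2 : Tendsto (fun t : ℝ => β * t) atBot atBot :=
    (tendsto_const_mul_atBot_of_pos hβ).2 tendsto_id
  have h3 : Tendsto (fun t : ℝ => Real.exp (β * t)) atBot (𝓝 0) :=
    Real.tendsto_exp_atBot.comp h2
  have h4 := (h3.comp h1).const_mul C
  simpa using h4

lemma exp_grow_atTop {β : ℝ} (hβ : 0 < β) {C : ℝ} (hC : 0 < C) :
    Tendsto (fun n : ℤ => C * Real.exp (β * (n : ℝ))) atTop atTop := by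
  have h1 : Tendsto (fun n : ℤ => (n : ℝ)) atTop atTop := tendsto_intCast_atTop_atTop
  have h2 : Tendsto (fun t : ℝ => β * t) atTop atTop :=
    (tendsto_const_mul_atTop_of_pos hβ).2 tendsto_id
  have h3 : Tendsto (fun t : ℝ => Real.exp (β * t)) atTop atTop :=
    Real.tendsto_exp_atTop.comp h2
  exact (tendsto_const_mul_atTop_of_pos hC).2 (h3.comp h1)

lemma exp_grow_atBot {β : ℝ} (hβ : β < 0) {C : ℝ} (hC : 0 < C) :
    Tendsto (fun n : ℤ => C * Real.exp (β * (n : ℝ))) atBot atTop := by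
  have h1 : Tendsto (fun n : ℤ => (n : ℝ)) atBot atBot := tendsto_intCast_atBot_iff.2 tendsto_id
  have h2 : Tendsto (fun t : ℝ => β * t) atBot atTop :=
    (tendsto_const_mul_atTop_of_neg hβ).2 tendsto_id
  have h3 : Tendsto (fun t : ℝ => Real.exp (β * t)) atBot atTop :=
    Real.tendsto_exp_atTop.comp h2
  exact (tendsto_const_mul_atTop_of_pos hC).2 (h3.comp h1)

variable {d : ℕ} (A : ℤ → (Euc d ≃L[ℝ] Euc d))

lemma solFwd_add (n : ℕ) (x y : Euc d) :
    solFwd A n (x + y) = solFwd A n x + solFwd A n y := by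
  induction n with
  | zero => rfl
  | succ n ih => simp [solFwd, ih, map_add]

lemma solBwd_add (n : ℕ) (x y : Euc d) :
    solBwd A n (x + y) = solBwd A n x + solBwd A n y := by
  induction n with
  | zero => simp [solBwd, map_add]
  | succ n ih => simp [solBwd, ih, map_add]

lemma solZ_add (n : ℤ) (x y : Euc d) :
    solZ A n (x + y) = solZ A n x + solZ A n y := by
  cases n with
  | ofNat n => exact solFwd_add A n x y
  | negSucc n => exact solBwd_add A n x y

lemma solFwd_smul (n : ℕ) (r : ℝ) (x : Euc d) :
    solFwd A n (r • x) = r • solFwd A n x := by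
  induction n with
  | zero => rfl
  | succ n ih => simp [solFwd, ih, map_smul]

lemma solBwd_smul (n : ℕ) (r : ℝ) (x : Euc d) :
    solBwd A n (r • x) = r • solBwd A n x := by
  induction n with
  | zero => simp [solBwd, map_smul]
  | succ n ih => simp [solBwd, ih, map_smul]

lemma solZ_smul (n : ℤ) (r : ℝ) (x : Euc d) :
    solZ A n (r • x) = r • solZ A n x := by
  cases n with
  | ofNat n => exact solFwd_smul A n r x
  | negSucc n => exact solBwd_smul A n r x

lemma solZ_zero (n : ℤ) : solZ A n (0 : Euc d) = 0 := by
  have := solZ_smul A n 0 0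
  simpa using this

lemma solZ_zero_time (x : Euc d) : solZ A 0 x = x := rfl

/-- The stable set at rate γ (forward decay). -/
def Sset (γ : ℝ) : Submodule ℝ (Euc d) where
  carrier := {x | Tendsto (fun n : ℤ => Real.exp (-(γ * (n : ℝ))) • solZ A n x) atTop (𝓝 0)}
  add_mem' := by
    intro x y hx hy
    have := hx.add hy
    simpa [solZ_add, smul_add] using this
  zero_mem' := by
    simp only [Set.mem_setOf_eq, solZ_zero, smul_zero]
    exact tendsto_const_nhds
  smul_mem' := by
    intro r x hx
    have := hx.const_smul r
    simpa [solZ_smul, smul_comm r] using this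

/-- The unstable set at rate γ (backward decay). -/
def Uset (γ : ℝ) : Submodule ℝ (Euc d) where
  carrier := {x | Tendsto (fun n : ℤ => Real.exp (-(γ * (n : ℝ))) • solZ A n x) atBot (𝓝 0)}
  add_mem' := by
    intro x y hx hy
    have := hx.add hy
    simpa [solZ_add, smul_add] using this
  zero_mem' := by
    simp only [Set.mem_setOf_eq, solZ_zero, smul_zero]
    exact tendsto_const_nhds
  smul_mem' := by
    intro r x hx
    have := hx.const_smul r
    simpa [solZ_smul, smul_comm r] using this

lemma mem_Sset {γ : ℝ} {x : Euc d} : x ∈ Sset A γ ↔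
    Tendsto (fun n : ℤ => Real.exp (-(γ * (n : ℝ))) • solZ A n x) atTop (𝓝 0) := Iff.rfl

lemma mem_Uset {γ : ℝ} {x : Euc d} : x ∈ Uset A γ ↔
    Tendsto (fun n : ℤ => Real.exp (-(γ * (n : ℝ))) • solZ A n x) atBot (𝓝 0) := Iff.rfl

end Aux

section Aux2
variable {d : ℕ} (A : ℤ → (Euc d ≃L[ℝ] Euc d))

lemma est_of_cover_D1 {γ : ℝ} {L : Submodule ℝ (Euc d)} {j : ℕ}
    (hcov : IsCover (Gr j L) L) (hD : ∀ U ∈ Gr j L, D1uZ A γ U) :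
    ∀ x ∈ L, ∃ C : ℝ, 0 < C ∧ ∀ m n : ℤ, m ≤ n →
      ‖solZ A n x‖ ≤ C * Real.exp (γ * ((n : ℝ) - (m : ℝ))) * ‖solZ A m x‖ := by
  intro x hx
  have hx' : x ∈ ⋃ U ∈ Gr j L, (U : Set (Euc d)) := by rw [hcov.2]; exact hx
  obtain ⟨U, hU, hxU⟩ := Set.mem_iUnion₂.1 hx'
  obtain ⟨C, hC, h⟩ := hD U hU
  exact ⟨C, hC, fun m n hmn => h m n hmn x hxU⟩

lemma est_of_cover_D2 {γ : ℝ} {L : Submodule ℝ (Euc d)} {j : ℕ}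
    (hcov : IsCover (Gr j L) L) (hD : ∀ U ∈ Gr j L, D2uZ A γ U) :
    ∀ x ∈ L, ∃ C : ℝ, 0 < C ∧ ∀ m n : ℤ, m ≤ n →
      C * Real.exp (γ * ((n : ℝ) - (m : ℝ))) * ‖solZ A m x‖ ≤ ‖solZ A n x‖ := by
  intro x hx
  have hx' : x ∈ ⋃ U ∈ Gr j L, (U : Set (Euc d)) := by rw [hcov.2]; exact hx
  obtain ⟨U, hU, hxU⟩ := Set.mem_iUnion₂.1 hx'
  obtain ⟨C, hC, h⟩ := hD U hU
  exact ⟨C, hC, fun m n hmn => h m n hmn x hxU⟩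

lemma norm_exp_smul (c : ℝ) (v : Euc d) :
    ‖Real.exp c • v‖ = Real.exp c * ‖v‖ := by
  rw [norm_smul, Real.norm_eq_abs, abs_of_pos (Real.exp_pos _)]

lemma localSU {γ α : ℝ} {L1 L2 : Submodule ℝ (Euc d)} (hα : 0 < α)
    (hcompl : IsCompl L1 L2)
    (est1 : ∀ x ∈ L1, ∃ C : ℝ, 0 < C ∧ ∀ m n : ℤ, m ≤ n →
      ‖solZ A n x‖ ≤ C * Real.exp ((γ - α) * ((n : ℝ) - (m : ℝ))) * ‖solZ A m x‖)
    (est2 : ∀ x ∈ L2, ∃ C : ℝ, 0 < C ∧ ∀ m n : ℤ, m ≤ n →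
      C * Real.exp ((γ + α) * ((n : ℝ) - (m : ℝ))) * ‖solZ A m x‖ ≤ ‖solZ A n x‖)
    {γ' : ℝ} (hlo : γ - α < γ') (hhi : γ' < γ + α) :
    Sset A γ' = L1 ∧ Uset A γ' = L2 := by
  have hexp : ∀ t : ℝ, 0 < Real.exp t := Real.exp_pos
  -- (i) L1 ≤ Sset
  have hi : L1 ≤ Sset A γ' := by
    intro x hx
    obtain ⟨C, hC, hb⟩ := est1 x hx
    rw [mem_Sset]
    apply squeeze_zero_norm'
      (a := fun n : ℤ => (C * ‖x‖) * Real.exp ((γ - α - γ') * (n : ℝ)))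
    · filter_upwards [eventually_ge_atTop (0 : ℤ)] with n hn
      have hb' := hb 0 n hn
      rw [solZ_zero_time] at hb'
      rw [norm_exp_smul]
      have e1 : Real.exp (-(γ' * (n : ℝ))) * Real.exp ((γ - α) * ((n : ℝ) - ((0 : ℤ) : ℝ)))
          = Real.exp ((γ - α - γ') * (n : ℝ)) := by
        rw [← Real.exp_add]; congr 1; push_cast; ring
      calc Real.exp (-(γ' * (n : ℝ))) * ‖solZ A n x‖
          ≤ Real.exp (-(γ' * (n : ℝ)))
            * (C * Real.exp ((γ - α) * ((n : ℝ) - ((0 : ℤ) : ℝ))) * ‖x‖) :=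
            mul_le_mul_of_nonneg_left hb' (le_of_lt (hexp _))
        _ = (C * ‖x‖) * Real.exp ((γ - α - γ') * (n : ℝ)) := by rw [← e1]; ring
    · exact exp_decay_atTop (by linarith) _
  -- (iii) L2 ≤ Uset
  have hiii : L2 ≤ Uset A γ' := by
    intro x hx
    obtain ⟨C, hC, hb⟩ := est2 x hx
    rw [mem_Uset]
    apply squeeze_zero_norm'
      (a := fun n : ℤ => (C⁻¹ * ‖x‖) * Real.exp ((γ + α - γ') * (n : ℝ)))
    · filter_upwards [eventually_le_atBot (0 : ℤ)] with n hn
      have hb' := hb n 0 hn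
      rw [solZ_zero_time] at hb'
      rw [norm_exp_smul]
      have e1 : Real.exp ((γ + α - γ') * (n : ℝ))
            * Real.exp ((γ + α) * (((0 : ℤ) : ℝ) - (n : ℝ)))
          = Real.exp (-(γ' * (n : ℝ))) := by
        rw [← Real.exp_add]; congr 1; push_cast; ring
      calc Real.exp (-(γ' * (n : ℝ))) * ‖solZ A n x‖
          = C⁻¹ * (Real.exp ((γ + α - γ') * (n : ℝ))
            * (C * Real.exp ((γ + α) * (((0 : ℤ) : ℝ) - (n : ℝ))) * ‖solZ A n x‖)) := by
            rw [← e1]; field_simp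
        _ ≤ C⁻¹ * (Real.exp ((γ + α - γ') * (n : ℝ)) * ‖x‖) := by
            apply mul_le_mul_of_nonneg_left _ (le_of_lt (inv_pos.2 hC))
            exact mul_le_mul_of_nonneg_left hb' (le_of_lt (hexp _))
        _ = (C⁻¹ * ‖x‖) * Real.exp ((γ + α - γ') * (n : ℝ)) := by ring
    · exact exp_decay_atBot (by linarith) _
  -- (ii) Sset ≤ L1
  have hii : Sset A γ' ≤ L1 := by
    intro x hx
    have hxsup : x ∈ L1 ⊔ L2 := by
      rw [hcompl.sup_eq_top]; trivial
    obtain ⟨y, hy, z, hz, hyz⟩ := Submodule.mem_sup.1 hxsup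
    have hz0 : z = 0 := by
      by_contra hne
      obtain ⟨C₁, hC₁, hb1⟩ := est1 y hy
      obtain ⟨C₂, hC₂, hb2⟩ := est2 z hz
      have hnz : (0 : ℝ) < ‖z‖ := norm_pos_iff.2 hne
      have hgrow := exp_grow_atTop (β := γ + α - γ') (by linarith) (mul_pos hC₂ hnz)
      have hev1 := hgrow.eventually_gt_atTop (1 + C₁ * ‖y‖)
      rw [mem_Sset] at hx
      have hev2 : ∀ᶠ n : ℤ in atTop,
          ‖Real.exp (-(γ' * (n : ℝ))) • solZ A n x‖ < 1 :=
        (NormedAddCommGroup.tendsto_nhds_zero.1 hx) 1 one_pos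
      obtain ⟨n, ⟨h1, h2⟩, hn0⟩ := ((hev1.and hev2).and (eventually_ge_atTop (0 : ℤ))).exists
      -- estimates at time n
      have hbz := hb2 0 n hn0
      have hby := hb1 0 n hn0
      rw [solZ_zero_time] at hbz hby
      have htri : ‖solZ A n z‖ ≤ ‖solZ A n x‖ + ‖solZ A n y‖ := by
        have : solZ A n z = solZ A n x - solZ A n y := by
          rw [← hyz, solZ_add]; abel
        rw [this]
        exact norm_sub_le _ _
      rw [norm_exp_smul] at h2
      have hE := hexp (-(γ' * (n : ℝ)))
      -- multiply htri through
      have key1 : Real.exp (-(γ' * (n : ℝ))) * ‖solZ A n z‖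
          ≥ C₂ * ‖z‖ * Real.exp ((γ + α - γ') * (n : ℝ)) := by
        have e1 : Real.exp (-(γ' * (n : ℝ)))
            * Real.exp ((γ + α) * ((n : ℝ) - ((0 : ℤ) : ℝ)))
            = Real.exp ((γ + α - γ') * (n : ℝ)) := by
          rw [← Real.exp_add]; congr 1; push_cast; ring
        calc C₂ * ‖z‖ * Real.exp ((γ + α - γ') * (n : ℝ))
            = Real.exp (-(γ' * (n : ℝ)))
              * (C₂ * Real.exp ((γ + α) * ((n : ℝ) - ((0 : ℤ) : ℝ))) * ‖z‖) := by
              rw [← e1]; ring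
          _ ≤ Real.exp (-(γ' * (n : ℝ))) * ‖solZ A n z‖ :=
              mul_le_mul_of_nonneg_left hbz (le_of_lt hE)
      have key2 : Real.exp (-(γ' * (n : ℝ))) * ‖solZ A n y‖ ≤ C₁ * ‖y‖ := by
        have e1 : Real.exp (-(γ' * (n : ℝ)))
            * Real.exp ((γ - α) * ((n : ℝ) - ((0 : ℤ) : ℝ)))
            = Real.exp ((γ - α - γ') * (n : ℝ)) := by
          rw [← Real.exp_add]; congr 1; push_cast; ring
        have hle1 : Real.exp ((γ - α - γ') * (n : ℝ)) ≤ 1 := by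
          rw [Real.exp_le_one_iff]
          apply mul_nonpos_of_nonpos_of_nonneg (by linarith)
          exact_mod_cast hn0
        calc Real.exp (-(γ' * (n : ℝ))) * ‖solZ A n y‖
            ≤ Real.exp (-(γ' * (n : ℝ)))
              * (C₁ * Real.exp ((γ - α) * ((n : ℝ) - ((0 : ℤ) : ℝ))) * ‖y‖) :=
              mul_le_mul_of_nonneg_left hby (le_of_lt hE)
          _ = (C₁ * ‖y‖) * Real.exp ((γ - α - γ') * (n : ℝ)) := by rw [← e1]; ring
          _ ≤ (C₁ * ‖y‖) * 1 :=
              mul_le_mul_of_nonneg_left hle1 (by positivity)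
          _ = C₁ * ‖y‖ := mul_one _
      have hchain : Real.exp (-(γ' * (n : ℝ))) * ‖solZ A n z‖
          ≤ Real.exp (-(γ' * (n : ℝ))) * ‖solZ A n x‖
            + Real.exp (-(γ' * (n : ℝ))) * ‖solZ A n y‖ := by
        rw [← mul_add]
        exact mul_le_mul_of_nonneg_left htri (le_of_lt hE)
      linarith [key1, key2, hchain, h1, h2]
    rw [← hyz, hz0, add_zero]
    exact hy
  -- (iv) Uset ≤ L2
  have hiv : Uset A γ' ≤ L2 := by
    intro x hx
    have hxsup : x ∈ L1 ⊔ L2 := by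
      rw [hcompl.sup_eq_top]; trivial
    obtain ⟨y, hy, z, hz, hyz⟩ := Submodule.mem_sup.1 hxsup
    have hy0 : y = 0 := by
      by_contra hne
      obtain ⟨C₁, hC₁, hb1⟩ := est1 y hy
      obtain ⟨C₂, hC₂, hb2⟩ := est2 z hz
      have hny : (0 : ℝ) < ‖y‖ := norm_pos_iff.2 hne
      have hgrow := exp_grow_atBot (β := γ - α - γ') (by linarith)
        (mul_pos (inv_pos.2 hC₁) hny)
      have hev1 := hgrow.eventually_gt_atTop (1 + C₂⁻¹ * ‖z‖)
      rw [mem_Uset] at hx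
      have hev2 : ∀ᶠ n : ℤ in atBot,
          ‖Real.exp (-(γ' * (n : ℝ))) • solZ A n x‖ < 1 :=
        (NormedAddCommGroup.tendsto_nhds_zero.1 hx) 1 one_pos
      obtain ⟨n, ⟨h1, h2⟩, hn0⟩ := ((hev1.and hev2).and (eventually_le_atBot (0 : ℤ))).exists
      have hby := hb1 n 0 hn0
      have hbz := hb2 n 0 hn0
      rw [solZ_zero_time] at hby hbz
      have htri : ‖solZ A n y‖ ≤ ‖solZ A n x‖ + ‖solZ A n z‖ := by
        have : solZ A n y = solZ A n x - solZ A n z := by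
          rw [← hyz, solZ_add]; abel
        rw [this]
        exact norm_sub_le _ _
      rw [norm_exp_smul] at h2
      have hE := hexp (-(γ' * (n : ℝ)))
      have key1 : Real.exp (-(γ' * (n : ℝ))) * ‖solZ A n y‖
          ≥ C₁⁻¹ * ‖y‖ * Real.exp ((γ - α - γ') * (n : ℝ)) := by
        -- from hby : ‖y‖ ≤ C₁ * exp((γ-α)*(0-n)) * ‖solZ A n y‖
        have e1 : Real.exp ((γ - α - γ') * (n : ℝ))
            * (Real.exp ((γ - α) * (((0 : ℤ) : ℝ) - (n : ℝ)))) = Real.exp (-(γ' * (n : ℝ))) := by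
          rw [← Real.exp_add]; congr 1; push_cast; ring
        have h3 : C₁⁻¹ * ‖y‖ ≤ Real.exp ((γ - α) * (((0 : ℤ) : ℝ) - (n : ℝ))) * ‖solZ A n y‖ := by
          rw [inv_mul_le_iff₀ hC₁]
          calc ‖y‖ ≤ C₁ * Real.exp ((γ - α) * (((0 : ℤ) : ℝ) - (n : ℝ))) * ‖solZ A n y‖ := hby
            _ = C₁ * (Real.exp ((γ - α) * (((0 : ℤ) : ℝ) - (n : ℝ))) * ‖solZ A n y‖) := by ring
        calc C₁⁻¹ * ‖y‖ * Real.exp ((γ - α - γ') * (n : ℝ))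
            ≤ (Real.exp ((γ - α) * (((0 : ℤ) : ℝ) - (n : ℝ))) * ‖solZ A n y‖)
              * Real.exp ((γ - α - γ') * (n : ℝ)) :=
              mul_le_mul_of_nonneg_right h3 (le_of_lt (hexp _))
          _ = Real.exp (-(γ' * (n : ℝ))) * ‖solZ A n y‖ := by rw [← e1]; ring
      have key2 : Real.exp (-(γ' * (n : ℝ))) * ‖solZ A n z‖ ≤ C₂⁻¹ * ‖z‖ := by
        -- from hbz : C₂ * exp((γ+α)*(0-n)) * ‖solZ A n z‖ ≤ ‖z‖
        have e1 : Real.exp (-(γ' * (n : ℝ)))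
            = Real.exp ((γ + α - γ') * (n : ℝ))
              * Real.exp ((γ + α) * (((0 : ℤ) : ℝ) - (n : ℝ))) := by
          rw [← Real.exp_add]; congr 1; push_cast; ring
        have hle1 : Real.exp ((γ + α - γ') * (n : ℝ)) ≤ 1 := by
          rw [Real.exp_le_one_iff]
          apply mul_nonpos_of_nonneg_of_nonpos (by linarith)
          exact_mod_cast hn0
        have h3 : Real.exp ((γ + α) * (((0 : ℤ) : ℝ) - (n : ℝ))) * ‖solZ A n z‖ ≤ C₂⁻¹ * ‖z‖ := by
          rw [← inv_mul_le_iff₀ (inv_pos.2 hC₂), inv_inv] at *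
          calc C₂ * (Real.exp ((γ + α) * (((0 : ℤ) : ℝ) - (n : ℝ))) * ‖solZ A n z‖)
              = C₂ * Real.exp ((γ + α) * (((0 : ℤ) : ℝ) - (n : ℝ))) * ‖solZ A n z‖ := by ring
            _ ≤ ‖z‖ := hbz
        calc Real.exp (-(γ' * (n : ℝ))) * ‖solZ A n z‖
            = Real.exp ((γ + α - γ') * (n : ℝ))
              * (Real.exp ((γ + α) * (((0 : ℤ) : ℝ) - (n : ℝ))) * ‖solZ A n z‖) := by
              rw [e1]; ring
          _ ≤ 1 * (C₂⁻¹ * ‖z‖) := by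
              apply mul_le_mul hle1 h3 (by positivity) zero_le_one
          _ = C₂⁻¹ * ‖z‖ := one_mul _
      have hchain : Real.exp (-(γ' * (n : ℝ))) * ‖solZ A n y‖
          ≤ Real.exp (-(γ' * (n : ℝ))) * ‖solZ A n x‖
            + Real.exp (-(γ' * (n : ℝ))) * ‖solZ A n z‖ := by
        rw [← mul_add]
        exact mul_le_mul_of_nonneg_left htri (le_of_lt hE)
      linarith [key1, key2, hchain, h1, h2]
    rw [← hyz, hy0, zero_add]
    exact hz
  exact ⟨le_antisymm hii hi, le_antisymm hiv hiii⟩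

end Aux2
section Aux3
variable {d : ℕ} (A : ℤ → (Euc d ≃L[ℝ] Euc d))

lemma resolvent_localSU (J : ℕ → ℕ × ℕ) {γ : ℝ} (hγ : γ ∈ dichResZ A J) :
    ∃ α : ℝ, 0 < α ∧ IsCompl (Sset A γ) (Uset A γ) ∧
      ∀ γ' : ℝ, |γ' - γ| < α → Sset A γ' = Sset A γ ∧ Uset A γ' = Uset A γ := by
  obtain ⟨L1, L2, hcompl, hcov1, hcov2, α, hα, hD1, hD2⟩ := hγ
  have est1 := est_of_cover_D1 A hcov1 hD1
  have est2 := est_of_cover_D2 A hcov2 hD2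
  have hself := localSU A hα hcompl est1 est2 (γ' := γ) (by linarith) (by linarith)
  refine ⟨α, hα, ?_, ?_⟩
  · rw [hself.1, hself.2]; exact hcompl
  · intro γ' h
    rw [abs_lt] at h
    have hthis := localSU A hα hcompl est1 est2 (γ' := γ')
      (by linarith [h.1]) (by linarith [h.2])
    exact ⟨hthis.1.trans hself.1.symm, hthis.2.trans hself.2.symm⟩

lemma locally_const_interval {β : Type*} (f : ℝ → β) {x y : ℝ} (hxy : x ≤ y)
    (H : ∀ t ∈ Set.Icc x y, ∃ ε : ℝ, 0 < ε ∧ ∀ s : ℝ, |s - t| < ε → f s = f t) :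
    f x = f y := by
  set T : Set ℝ := {t ∈ Set.Icc x y | f t = f x} with hT
  have hxT : x ∈ T := ⟨⟨le_refl x, hxy⟩, rfl⟩
  have hne : T.Nonempty := ⟨x, hxT⟩
  have hbdd : BddAbove T := ⟨y, fun t ht => ht.1.2⟩
  set c := sSup T with hc
  have hxc : x ≤ c := le_csSup hbdd hxT
  have hcy : c ≤ y := csSup_le hne fun t ht => ht.1.2
  obtain ⟨ε, hε, hconst⟩ := H c ⟨hxc, hcy⟩
  have hcT : f c = f x := by
    obtain ⟨t, htT, htc⟩ := exists_lt_of_lt_csSup hne (by linarith : c - ε < c)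
    have htle : t ≤ c := le_csSup hbdd htT
    have : f t = f c := hconst t (by rw [abs_lt]; constructor <;> linarith)
    rw [← this, htT.2]
  have hcy' : c = y := by
    by_contra hne'
    have hlt : c < y := lt_of_le_of_ne hcy hne'
    set s := min y (c + ε / 2) with hs
    have hsc : c < s := lt_min_iff.2 ⟨hlt, by linarith⟩
    have hsy : s ≤ y := min_le_left _ _
    have hsmem : s ∈ T := by
      refine ⟨⟨le_trans hxc (le_of_lt hsc), hsy⟩, ?_⟩
      have : f s = f c := by
        apply hconst
        rw [abs_lt]
        constructor
        · linarith
        · have : s ≤ c + ε / 2 := min_le_right _ _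
          linarith
      rw [this, hcT]
    have := le_csSup hbdd hsmem
    linarith
  rw [← hcy', hcT]

/-- Constancy of `(Sset, Uset)` on intervals contained in the resolvent. -/
lemma SU_const_on_res (J : ℕ → ℕ × ℕ) {γ₁ γ₂ : ℝ} (h12 : γ₁ ≤ γ₂)
    (hres : ∀ t, γ₁ ≤ t → t ≤ γ₂ → t ∈ dichResZ A J) :
    Sset A γ₁ = Sset A γ₂ ∧ Uset A γ₁ = Uset A γ₂ := by
  have := locally_const_interval (f := fun t => (Sset A t, Uset A t)) h12 ?_
  · exact ⟨congrArg Prod.fst this, congrArg Prod.snd this⟩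
  · intro t ht
    obtain ⟨α, hα, _, hloc⟩ := resolvent_localSU A J (hres t ht.1 ht.2)
    exact ⟨α, hα, fun s hs => by
      have := hloc s hs
      simp only [Prod.mk.injEq]
      exact ⟨this.1, this.2⟩⟩

end Aux3
section Aux4
variable {d : ℕ} (A : ℤ → (Euc d ≃L[ℝ] Euc d))

lemma norm_equiv_apply_le {c : ℝ} (hc : ∀ n : ℤ, ‖(A n : Euc d →L[ℝ] Euc d)‖ ≤ c)
    (n : ℤ) (v : Euc d) : ‖A n v‖ ≤ c * ‖v‖ := by
  calc ‖A n v‖ = ‖(A n : Euc d →L[ℝ] Euc d) v‖ := rfl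
    _ ≤ ‖(A n : Euc d →L[ℝ] Euc d)‖ * ‖v‖ := (A n : Euc d →L[ℝ] Euc d).le_opNorm v
    _ ≤ c * ‖v‖ := mul_le_mul_of_nonneg_right (hc n) (norm_nonneg v)

lemma norm_equiv_symm_apply_le {c : ℝ} (hc : ∀ n : ℤ, ‖((A n).symm : Euc d →L[ℝ] Euc d)‖ ≤ c)
    (n : ℤ) (v : Euc d) : ‖(A n).symm v‖ ≤ c * ‖v‖ := by
  calc ‖(A n).symm v‖ = ‖((A n).symm : Euc d →L[ℝ] Euc d) v‖ := rfl
    _ ≤ ‖((A n).symm : Euc d →L[ℝ] Euc d)‖ * ‖v‖ :=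
      ((A n).symm : Euc d →L[ℝ] Euc d).le_opNorm v
    _ ≤ c * ‖v‖ := mul_le_mul_of_nonneg_right (hc n) (norm_nonneg v)

lemma fwd_lower_bound {c : ℝ} (hc1 : 1 ≤ c)
    (hc : ∀ n : ℤ, ‖((A n).symm : Euc d →L[ℝ] Euc d)‖ ≤ c) (x : Euc d) :
    ∀ n : ℕ, ‖x‖ ≤ c ^ n * ‖solFwd A n x‖ := by
  intro n
  induction n with
  | zero => simpa [solFwd] using le_refl ‖x‖
  | succ n ih =>
    have hstep : ‖solFwd A n x‖ ≤ c * ‖solFwd A (n + 1) x‖ := by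
      have : solFwd A n x = (A (n : ℤ)).symm (solFwd A (n + 1) x) := by
        simp [solFwd]
      rw [this]
      exact norm_equiv_symm_apply_le A hc _ _
    calc ‖x‖ ≤ c ^ n * ‖solFwd A n x‖ := ih
      _ ≤ c ^ n * (c * ‖solFwd A (n + 1) x‖) :=
        mul_le_mul_of_nonneg_left hstep (by positivity)
      _ = c ^ (n + 1) * ‖solFwd A (n + 1) x‖ := by ring

lemma bwd_lower_bound {c : ℝ} (hc1 : 1 ≤ c)
    (hc : ∀ n : ℤ, ‖(A n : Euc d →L[ℝ] Euc d)‖ ≤ c) (x : Euc d) :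
    ∀ n : ℕ, ‖x‖ ≤ c ^ (n + 1) * ‖solBwd A n x‖ := by
  intro n
  induction n with
  | zero =>
    have : x = A (-1) (solBwd A 0 x) := by simp [solBwd]
    calc ‖x‖ = ‖A (-1) (solBwd A 0 x)‖ := by rw [← this]
      _ ≤ c * ‖solBwd A 0 x‖ := norm_equiv_apply_le A hc _ _
      _ = c ^ 1 * ‖solBwd A 0 x‖ := by ring
  | succ n ih =>
    have hstep : ‖solBwd A n x‖ ≤ c * ‖solBwd A (n + 1) x‖ := by
      have : solBwd A n x = A (Int.negSucc (n + 1)) (solBwd A (n + 1) x) := by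
        simp [solBwd]
      rw [this]
      exact norm_equiv_apply_le A hc _ _
    calc ‖x‖ ≤ c ^ (n + 1) * ‖solBwd A n x‖ := ih
      _ ≤ c ^ (n + 1) * (c * ‖solBwd A (n + 1) x‖) :=
        mul_le_mul_of_nonneg_left hstep (by positivity)
      _ = c ^ (n + 1 + 1) * ‖solBwd A (n + 1) x‖ := by ring

lemma Sset_eq_bot (hA : BddSysZ A) :
    ∃ γ₀ : ℝ, ∀ γ : ℝ, γ < γ₀ → Sset A γ = ⊥ := by
  obtain ⟨-, c, hc⟩ := hA
  set c' := max c 1 with hc'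
  have hc1 : (1 : ℝ) ≤ c' := le_max_right _ _
  have hcpos : (0 : ℝ) < c' := by linarith
  have hc'' : ∀ n : ℤ, ‖((A n).symm : Euc d →L[ℝ] Euc d)‖ ≤ c' :=
    fun n => le_trans (hc n) (le_max_left _ _)
  refine ⟨-(Real.log c'), fun γ hγ => ?_⟩
  rw [eq_bot_iff]
  intro x hx
  simp only [Submodule.mem_bot]
  by_contra hne
  have hnx : (0 : ℝ) < ‖x‖ := norm_pos_iff.2 hne
  rw [mem_Sset] at hx
  have hev : ∀ᶠ n : ℤ in atTop,
      ‖Real.exp (-(γ * (n : ℝ))) • solZ A n x‖ < ‖x‖ :=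
    (NormedAddCommGroup.tendsto_nhds_zero.1 hx) ‖x‖ hnx
  obtain ⟨n, h1, hn0⟩ := (hev.and (eventually_ge_atTop (0 : ℤ))).exists
  have hsol : solZ A n x = solFwd A n.toNat x := by
    conv_lhs => rw [← Int.toNat_of_nonneg hn0]
    rfl
  have hlow := fwd_lower_bound A hc1 hc'' x n.toNat
  rw [← hsol] at hlow
  have hnr : ((n.toNat : ℕ) : ℝ) = (n : ℝ) := by exact_mod_cast Int.toNat_of_nonneg hn0
  have hcpow : (c' : ℝ) ^ n.toNat = Real.exp ((n : ℝ) * Real.log c') := by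
    rw [← Real.rpow_natCast c' n.toNat, Real.rpow_def_of_pos hcpos]
    congr 1
    rw [hnr]; ring
  rw [hcpow] at hlow
  rw [norm_exp_smul] at h1
  have e1 : Real.exp (-(γ * (n : ℝ)))
      = Real.exp ((-γ - Real.log c') * (n : ℝ)) * Real.exp ((n : ℝ) * Real.log c') := by
    rw [← Real.exp_add]; congr 1; ring
  have hge1 : (1 : ℝ) ≤ Real.exp ((-γ - Real.log c') * (n : ℝ)) := by
    rw [Real.one_le_exp_iff]
    apply mul_nonneg (by linarith)
    exact_mod_cast hn0
  have hkey : ‖x‖ ≤ Real.exp (-(γ * (n : ℝ))) * ‖solZ A n x‖ := by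
    calc ‖x‖ ≤ Real.exp ((n : ℝ) * Real.log c') * ‖solZ A n x‖ := hlow
      _ = 1 * (Real.exp ((n : ℝ) * Real.log c') * ‖solZ A n x‖) := (one_mul _).symm
      _ ≤ Real.exp ((-γ - Real.log c') * (n : ℝ))
          * (Real.exp ((n : ℝ) * Real.log c') * ‖solZ A n x‖) :=
          mul_le_mul_of_nonneg_right hge1 (by positivity)
      _ = Real.exp (-(γ * (n : ℝ))) * ‖solZ A n x‖ := by rw [e1]; ring
  linarith

lemma Uset_eq_bot (hA : BddSysZ A) :
    ∃ γ₀ : ℝ, ∀ γ : ℝ, γ₀ < γ → Uset A γ = ⊥ := by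
  obtain ⟨⟨c, hc⟩, -⟩ := hA
  set c' := max c 1 with hc'
  have hc1 : (1 : ℝ) ≤ c' := le_max_right _ _
  have hcpos : (0 : ℝ) < c' := by linarith
  have hc'' : ∀ n : ℤ, ‖(A n : Euc d →L[ℝ] Euc d)‖ ≤ c' :=
    fun n => le_trans (hc n) (le_max_left _ _)
  refine ⟨Real.log c', fun γ hγ => ?_⟩
  rw [eq_bot_iff]
  intro x hx
  simp only [Submodule.mem_bot]
  by_contra hne
  have hnx : (0 : ℝ) < ‖x‖ := norm_pos_iff.2 hne
  rw [mem_Uset] at hx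
  have hev : ∀ᶠ n : ℤ in atBot,
      ‖Real.exp (-(γ * (n : ℝ))) • solZ A n x‖ < ‖x‖ :=
    (NormedAddCommGroup.tendsto_nhds_zero.1 hx) ‖x‖ hnx
  obtain ⟨n, h1, hn0⟩ := (hev.and (eventually_le_atBot (-1 : ℤ))).exists
  -- n ≤ -1, write n = negSucc k
  set k := (-(n + 1)).toNat with hk
  have hkn : n = Int.negSucc k := by
    rw [Int.negSucc_eq, hk]
    have : (0 : ℤ) ≤ -(n + 1) := by linarith
    rw [Int.toNat_of_nonneg this]
    ring
  have hsol : solZ A n x = solBwd A k x := by rw [hkn]; rfl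
  have hlow := bwd_lower_bound A hc1 hc'' x k
  rw [← hsol] at hlow
  have hnr : ((k : ℕ) : ℝ) + 1 = -(n : ℝ) := by
    have : ((k : ℕ) : ℤ) + 1 = -n := by
      rw [hkn, Int.negSucc_eq]; push_cast; ring
    exact_mod_cast this
  have hcpow : (c' : ℝ) ^ (k + 1) = Real.exp (-(n : ℝ) * Real.log c') := by
    rw [← Real.rpow_natCast c' (k + 1), Real.rpow_def_of_pos hcpos]
    congr 1
    push_cast
    rw [← hnr]; push_cast; ring
  rw [hcpow] at hlow
  rw [norm_exp_smul] at h1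
  have e1 : Real.exp (-(γ * (n : ℝ)))
      = Real.exp ((γ - Real.log c') * (-(n : ℝ))) * Real.exp (-(n : ℝ) * Real.log c') := by
    rw [← Real.exp_add]; congr 1; ring
  have hge1 : (1 : ℝ) ≤ Real.exp ((γ - Real.log c') * (-(n : ℝ))) := by
    rw [Real.one_le_exp_iff]
    apply mul_nonneg (by linarith)
    have : (n : ℝ) ≤ -1 := by exact_mod_cast hn0
    linarith
  have hkey : ‖x‖ ≤ Real.exp (-(γ * (n : ℝ))) * ‖solZ A n x‖ := by
    calc ‖x‖ ≤ Real.exp (-(n : ℝ) * Real.log c') * ‖solZ A n x‖ := hlow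
      _ = 1 * (Real.exp (-(n : ℝ) * Real.log c') * ‖solZ A n x‖) := (one_mul _).symm
      _ ≤ Real.exp ((γ - Real.log c') * (-(n : ℝ)))
          * (Real.exp (-(n : ℝ) * Real.log c') * ‖solZ A n x‖) :=
          mul_le_mul_of_nonneg_right hge1 (by positivity)
      _ = Real.exp (-(γ * (n : ℝ))) * ‖solZ A n x‖ := by rw [e1]; ring
  linarith

/-- Monotonicity of the stable family. -/
lemma Sset_mono {γ γ' : ℝ} (h : γ ≤ γ') : Sset A γ ≤ Sset A γ' := by
  intro x hx
  rw [mem_Sset] at hx ⊢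
  apply squeeze_zero_norm' (a := fun n : ℤ => ‖Real.exp (-(γ * (n : ℝ))) • solZ A n x‖)
  · filter_upwards [eventually_ge_atTop (0 : ℤ)] with n hn
    rw [norm_exp_smul, norm_exp_smul]
    apply mul_le_mul_of_nonneg_right _ (norm_nonneg _)
    apply Real.exp_le_exp.2
    have hn' : (0 : ℝ) ≤ (n : ℝ) := by exact_mod_cast hn
    nlinarith
  · exact (tendsto_norm_zero.comp hx : _)

/-- Antitonicity of the unstable family. -/
lemma Uset_anti {γ γ' : ℝ} (h : γ ≤ γ') : Uset A γ' ≤ Uset A γ := by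
  intro x hx
  rw [mem_Uset] at hx ⊢
  apply squeeze_zero_norm' (a := fun n : ℤ => ‖Real.exp (-(γ' * (n : ℝ))) • solZ A n x‖)
  · filter_upwards [eventually_le_atBot (0 : ℤ)] with n hn
    rw [norm_exp_smul, norm_exp_smul]
    apply mul_le_mul_of_nonneg_right _ (norm_nonneg _)
    apply Real.exp_le_exp.2
    have hn' : (n : ℝ) ≤ 0 := by exact_mod_cast hn
    nlinarith
  · exact (tendsto_norm_zero.comp hx : _)

end Aux4
section Gaps

/-- The `k`-th spectral gap determined by interval endpoints `a`, `b`. -/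
def GapSet {ℓ : ℕ} (a b : Fin ℓ → ℝ) (k : ℕ) : Set ℝ :=
  {γ | (∀ j : Fin ℓ, (j : ℕ) < k → b j < γ) ∧ (∀ j : Fin ℓ, k ≤ (j : ℕ) → γ < a j)}

lemma gapSet_ordConn {ℓ : ℕ} (a b : Fin ℓ → ℝ) {k : ℕ} {γ γ' t : ℝ}
    (h : γ ∈ GapSet a b k) (h' : γ' ∈ GapSet a b k) (h1 : γ ≤ t) (h2 : t ≤ γ') :
    t ∈ GapSet a b k :=
  ⟨fun j hj => lt_of_lt_of_le (h.1 j hj) h1, fun j hj => lt_of_le_of_lt h2 (h'.2 j hj)⟩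

lemma SU_eq_on_gap {d : ℕ} (A : ℤ → (Euc d ≃L[ℝ] Euc d)) (J : ℕ → ℕ × ℕ)
    {ℓ : ℕ} {a b : Fin ℓ → ℝ} {k : ℕ}
    (hres : ∀ γ ∈ GapSet a b k, γ ∈ dichResZ A J) {γ γ' : ℝ}
    (hγ : γ ∈ GapSet a b k) (hγ' : γ' ∈ GapSet a b k) :
    Sset A γ = Sset A γ' ∧ Uset A γ = Uset A γ' := by
  rcases le_total γ γ' with h | h
  · exact SU_const_on_res A J h
      (fun t ht1 ht2 => hres t (gapSet_ordConn a b hγ hγ' ht1 ht2))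
  · have := SU_const_on_res A J h
      (fun t ht1 ht2 => hres t (gapSet_ordConn a b hγ' hγ ht1 ht2))
    exact ⟨this.1.symm, this.2.symm⟩

end Gaps

/-- **Spectral decomposition for two-sided time.** Given the spectral intervals
`[a_1,b_1], …, [a_ℓ,b_ℓ]` of `Σ_J(A)`, there are subspaces `W_k`, dynamically
characterized by convergence at `±∞` for rates `γ₁, γ₂` in the neighbouring spectral
gaps, with `ℝ^d = W_1 ⊕ … ⊕ W_ℓ`. -/
theorem spectral_decomposition_Z {d : ℕ} (hd : 1 ≤ d)
    (A : ℤ → (Euc d ≃L[ℝ] Euc d)) (hA : BddSysZ A)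
    (J : ℕ → ℕ × ℕ) (hJ : ∀ k ≤ d, KAdmissible d k (J k).1 (J k).2)
    (ℓ : ℕ) (hℓ1 : 1 ≤ ℓ) (hℓd : ℓ ≤ d) (a b : Fin ℓ → ℝ)
    (hab : ∀ i, a i ≤ b i) (hord : ∀ i j : Fin ℓ, i < j → b i < a j)
    (hspec : (dichResZ A J)ᶜ = ⋃ i : Fin ℓ, Set.Icc (a i) (b i)) :
    ∃ W : Fin ℓ → Submodule ℝ (Euc d),
      (∀ k : Fin ℓ, ∀ γ₁ γ₂ : ℝ,
        (γ₁ < a k ∧ ∀ j : Fin ℓ, j < k → b j < γ₁) →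
        (b k < γ₂ ∧ ∀ j : Fin ℓ, k < j → γ₂ < a j) →
        (W k : Set (Euc d)) =
          {x₀ | Tendsto (fun n : ℤ => Real.exp (-(γ₁ * (n : ℝ))) • solZ A n x₀) atBot (𝓝 0) ∧
                Tendsto (fun n : ℤ => Real.exp (-(γ₂ * (n : ℝ))) • solZ A n x₀) atTop (𝓝 0)}) ∧
      iSupIndep W ∧ (⨆ k : Fin ℓ, W k) = ⊤ := by
  classical
  obtain ⟨γS, hγS⟩ := Sset_eq_bot A hA
  obtain ⟨γU, hγU⟩ := Uset_eq_bot A hA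
  -- every gap point is in the resolvent
  have hres0 : ∀ γ : ℝ, (∀ i : Fin ℓ, γ < a i ∨ b i < γ) → γ ∈ dichResZ A J := by
    intro γ h
    by_contra hc
    have hmem : γ ∈ (dichResZ A J)ᶜ := hc
    rw [hspec] at hmem
    obtain ⟨i, hi⟩ := Set.mem_iUnion.1 hmem
    rcases h i with h' | h'
    · exact absurd hi.1 (not_le.2 h')
    · exact absurd hi.2 (not_le.2 h')
  have hgapres : ∀ k : ℕ, ∀ γ ∈ GapSet a b k, γ ∈ dichResZ A J := by
    intro k γ hγ
    apply hres0
    intro i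
    by_cases hik : (i : ℕ) < k
    · exact Or.inr (hγ.1 i hik)
    · exact Or.inl (hγ.2 i (le_of_not_gt hik))
  have ha_mono : ∀ i j : Fin ℓ, i ≤ j → a i ≤ a j := by
    intro i j hij
    rcases lt_or_eq_of_le hij with h | h
    · exact le_of_lt (lt_of_le_of_lt (hab i) (hord i j h))
    · rw [h]
  -- canonical gap points
  set g : ℕ → ℝ := fun k =>
    if k = 0 then min (a ⟨0, hℓ1⟩ - 1) (γS - 1)
    else if hk : k < ℓ then (b ⟨k - 1, by omega⟩ + a ⟨k, hk⟩) / 2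
    else max (b ⟨ℓ - 1, by omega⟩ + 1) (γU + 1)
    with hgdef
  have hg0 : g 0 = min (a ⟨0, hℓ1⟩ - 1) (γS - 1) := by simp [hgdef]
  have hgmid : ∀ k, 0 < k → ∀ hk : k < ℓ,
      g k = (b ⟨k - 1, by omega⟩ + a ⟨k, hk⟩) / 2 := by
    intro k h0 hk
    have h0' : k ≠ 0 := by omega
    simp [hgdef, h0', hk]
  have hgtop : g ℓ = max (b ⟨ℓ - 1, by omega⟩ + 1) (γU + 1) := by
    have h0' : ℓ ≠ 0 := by omega
    simp [hgdef, h0']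
  -- gap membership of the canonical points
  have hgmem : ∀ k, k ≤ ℓ → g k ∈ GapSet a b k := by
    intro k hk
    rcases Nat.eq_zero_or_pos k with h0 | h0
    · subst h0
      constructor
      · intro j hj; omega
      · intro j _
        have h1 : g 0 ≤ a ⟨0, hℓ1⟩ - 1 := by rw [hg0]; exact min_le_left _ _
        have h2 : a ⟨0, hℓ1⟩ ≤ a j := ha_mono _ _ (by simp [Fin.le_def])
        linarith
    · rcases lt_or_eq_of_le hk with hkl | hkl
      · -- middle gap
        have hge := hgmid k h0 hkl
        have hfin : b ⟨k - 1, by omega⟩ < a ⟨k, hkl⟩ :=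
          hord _ _ (by rw [Fin.lt_def]; simp; omega)
        constructor
        · intro j hj
          have h2 : b j < g k := by
            rcases Nat.lt_or_ge (j : ℕ) (k - 1) with hj' | hj'
            · have : b j < a ⟨k - 1, by omega⟩ := hord _ _ (by rw [Fin.lt_def]; simpa)
              have : b j < b ⟨k - 1, by omega⟩ := lt_of_lt_of_le this (hab _)
              rw [hge]; linarith
            · have hj'' : (j : ℕ) = k - 1 := by omega
              have : j = ⟨k - 1, by omega⟩ := Fin.ext hj''
              rw [this, hge]; linarith
          exact h2
        · intro j hj
          have h1 : g k < a ⟨k, hkl⟩ := by rw [hge]; linarith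
          have h2 : a ⟨k, hkl⟩ ≤ a j := ha_mono _ _ (by rw [Fin.le_def]; simpa)
          linarith
      · -- top gap
        subst hkl
        constructor
        · intro j hj
          have h1 : b ⟨k - 1, by omega⟩ + 1 ≤ g k := by rw [hgtop]; exact le_max_left _ _
          rcases Nat.lt_or_ge (j : ℕ) (k - 1) with hj' | hj'
          · have : b j < a ⟨k - 1, by omega⟩ := hord _ _ (by rw [Fin.lt_def]; simpa)
            have := lt_of_lt_of_le this (hab ⟨k - 1, by omega⟩)
            linarith
          · have hj'' : (j : ℕ) = k - 1 := by omega
            have hje : j = ⟨k - 1, by omega⟩ := Fin.ext hj''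
            rw [hje]; linarith
        · intro j hj
          exact absurd j.isLt (by omega)
  -- endpoint triviality
  have hSbot : Sset A (g 0) = ⊥ := by
    apply hγS
    have : g 0 ≤ γS - 1 := by rw [hg0]; exact min_le_right _ _
    linarith
  have hUbot : Uset A (g ℓ) = ⊥ := by
    apply hγU
    have : γU + 1 ≤ g ℓ := by rw [hgtop]; exact le_max_right _ _
    linarith
  -- complementarity at gap points
  have hcompl : ∀ k, k ≤ ℓ → IsCompl (Sset A (g k)) (Uset A (g k)) := by
    intro k hk
    obtain ⟨α, hα, hc, -⟩ := resolvent_localSU A J (hgapres k _ (hgmem k hk))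
    exact hc
  -- monotonicity of gap points
  have hgstep : ∀ k, k < ℓ → g k < g (k + 1) := by
    intro k hk
    have h1 : g k < a ⟨k, hk⟩ := (hgmem k (le_of_lt hk)).2 ⟨k, hk⟩ (by simp)
    have h2 : b ⟨k, hk⟩ < g (k + 1) := (hgmem (k + 1) hk).1 ⟨k, hk⟩ (by simp)
    linarith [hab ⟨k, hk⟩]
  have hgmono : ∀ p q, p ≤ q → q ≤ ℓ → g p ≤ g q := by
    intro p q hpq hq
    induction q with
    | zero => have : p = 0 := by omega
              rw [this]
    | succ q ih =>
      rcases Nat.lt_or_ge p (q + 1) with h | h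
      · exact le_trans (ih (by omega) (by omega)) (le_of_lt (hgstep q (by omega)))
      · have : p = q + 1 := by omega
        rw [this]
  -- the spectral subspaces
  set W : Fin ℓ → Submodule ℝ (Euc d) :=
    fun k => Sset A (g ((k : ℕ) + 1)) ⊓ Uset A (g (k : ℕ)) with hWdef
  have hWS : ∀ k : Fin ℓ, W k ≤ Sset A (g ((k : ℕ) + 1)) := fun k => inf_le_left
  have hWU : ∀ k : Fin ℓ, W k ≤ Uset A (g (k : ℕ)) := fun k => inf_le_right
  refine ⟨W, ?_, ?_, ?_⟩
  · -- characterization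
    intro k γ₁ γ₂ h1 h2
    have hγ₁gap : γ₁ ∈ GapSet a b (k : ℕ) := by
      constructor
      · intro j hj
        exact h1.2 j (Fin.lt_def.2 hj)
      · intro j hj
        rcases Nat.lt_or_ge (k : ℕ) (j : ℕ) with h | h
        · exact lt_trans (lt_of_lt_of_le h1.1 (hab k)) (hord k j (Fin.lt_def.2 h))
        · have : j = k := Fin.ext (by omega)
          rw [this]; exact h1.1
    have hγ₂gap : γ₂ ∈ GapSet a b ((k : ℕ) + 1) := by
      constructor
      · intro j hj
        rcases Nat.lt_or_ge (j : ℕ) (k : ℕ) with h | h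
        · exact lt_trans (lt_of_lt_of_le (hord j k (Fin.lt_def.2 h)) (hab k)) h2.1
        · have : j = k := Fin.ext (by omega)
          rw [this]; exact h2.1
      · intro j hj
        exact h2.2 j (Fin.lt_def.2 (by omega))
    have e1 := SU_eq_on_gap A J (hgapres (k : ℕ)) hγ₁gap (hgmem (k : ℕ) (by omega))
    have e2 := SU_eq_on_gap A J (hgapres ((k : ℕ) + 1)) hγ₂gap (hgmem ((k : ℕ) + 1) (by omega))
    ext x
    constructor
    · intro hx
      have hx' : x ∈ Sset A (g ((k : ℕ) + 1)) ∧ x ∈ Uset A (g (k : ℕ)) :=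
        Submodule.mem_inf.1 hx
      refine ⟨?_, ?_⟩
      · rw [← mem_Uset]
        rw [e1.2]
        exact hx'.2
      · rw [← mem_Sset]
        rw [e2.1]
        exact hx'.1
    · intro hx
      apply Submodule.mem_inf.2
      constructor
      · rw [← e2.1]
        exact hx.2
      · rw [← e1.2]
        exact hx.1
  · -- independence
    intro k
    have hsub : (⨆ j, ⨆ (_ : j ≠ k), W j) ≤ Sset A (g (k : ℕ)) ⊔ Uset A (g ((k : ℕ) + 1)) := by
      apply iSup₂_le
      intro j hj
      rcases lt_or_gt_of_ne hj with h | h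
      · apply le_trans _ le_sup_left
        exact le_trans (hWS j) (Sset_mono A (hgmono ((j : ℕ) + 1) (k : ℕ)
          (by have := Fin.lt_def.1 h; omega) (by omega)))
      · apply le_trans _ le_sup_right
        exact le_trans (hWU j) (Uset_anti A (hgmono ((k : ℕ) + 1) (j : ℕ)
          (by have := Fin.lt_def.1 h; omega) (by omega)))
    apply Disjoint.mono_right hsub
    rw [Submodule.disjoint_def]
    intro x hxW hxsup
    obtain ⟨s, hs, u, hu, hsu⟩ := Submodule.mem_sup.1 hxsup
    have hxS : x ∈ Sset A (g ((k : ℕ) + 1)) := (Submodule.mem_inf.1 hxW).1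
    have hxU : x ∈ Uset A (g (k : ℕ)) := (Submodule.mem_inf.1 hxW).2
    have hsS : s ∈ Sset A (g ((k : ℕ) + 1)) :=
      Sset_mono A (hgmono (k : ℕ) ((k : ℕ) + 1) (by omega) (by omega)) hs
    have hu' : u ∈ Sset A (g ((k : ℕ) + 1)) := by
      have : u = x - s := by rw [← hsu]; abel
      rw [this]
      exact Submodule.sub_mem _ hxS hsS
    have hu0 : u = 0 :=
      Submodule.disjoint_def.1 (hcompl ((k : ℕ) + 1) (by omega)).1 u hu' hu
    have hxs : x = s := by rw [← hsu, hu0, add_zero]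
    exact Submodule.disjoint_def.1 (hcompl (k : ℕ) (by omega)).1 x (hxs ▸ hs) hxU
  · -- spanning
    have hstep : ∀ m, ∀ hm : m < ℓ, Sset A (g (m + 1)) ≤ Sset A (g m) ⊔ W ⟨m, hm⟩ := by
      intro m hm x hx
      have hxt : x ∈ Sset A (g m) ⊔ Uset A (g m) := by
        rw [(hcompl m (le_of_lt hm)).sup_eq_top]
        trivial
      obtain ⟨s, hs, u, hu, hsu⟩ := Submodule.mem_sup.1 hxt
      have hsS : s ∈ Sset A (g (m + 1)) :=
        Sset_mono A (hgmono m (m + 1) (by omega) (by omega)) hs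
      have hu' : u ∈ Sset A (g (m + 1)) := by
        have : u = x - s := by rw [← hsu]; abel
        rw [this]
        exact Submodule.sub_mem _ hx hsS
      refine Submodule.mem_sup.2 ⟨s, hs, u, ?_, hsu⟩
      exact Submodule.mem_inf.2 ⟨hu', hu⟩
    have hind : ∀ m, m ≤ ℓ → Sset A (g m) ≤ ⨆ k, W k := by
      intro m
      induction m with
      | zero => intro _; rw [hSbot]; exact bot_le
      | succ m ih =>
        intro hm
        calc Sset A (g (m + 1)) ≤ Sset A (g m) ⊔ W ⟨m, by omega⟩ := hstep m (by omega)
          _ ≤ ⨆ k, W k := sup_le (ih (by omega)) (le_iSup W _)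
    have htop : Sset A (g ℓ) = ⊤ := by
      have := (hcompl ℓ le_rfl).sup_eq_top
      rw [hUbot, sup_bot_eq] at this
      exact this
    rw [eq_top_iff, ← htop]
    exact hind ℓ le_rfl

end
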